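/- If the restricted root system Σ is of type BC_n or C_n (n ≥ 2) with multiplicity m(2e_i) = 1, and α is a longest root of Σ̃ with restriction e_1 + e_k (2 ≤ k ≤ n), then for any root β with restriction e_1 − e_k, one has (α,β) = 0 unless β = α_1 − α or β = α − α_k, where α_i denotes the unique root with restriction 2e_i. -/

import Mathlib

open scoped RealInnerProductSpace

/-! If `(α, β) < 0`, then `α + β` is a root restricting to `(e₁ + e_k) + (e₁ - e_k) = 2e₁`, so it
is `α₁` by uniqueness; if `(α, β) > 0`, then `α - β` is a root restricting to `2e_k`, so it is
`α_k`. The root-string axioms apply because `β ≠ ±α`, their restrictions being different. -/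

section Restriction

variable {V : Type*} [AddCommGroup V] [Module ℝ V]

lemma eq_coe_half_smul_id_add {σ : V →ₗ[ℝ] V} {res : V → V}
    (hres : ∀ v, res v = (1 / 2 : ℝ) • (v + σ v)) :
    res = ⇑((1 / 2 : ℝ) • (LinearMap.id + σ) : V →ₗ[ℝ] V) :=
  funext hres

lemma add_ne_sub_of_ne_zero {y : V} (hy : y ≠ 0) (x : V) : x + y ≠ x - y := by
  intro h
  have h2 : (2 : ℝ) • y = 0 := by linear_combination (norm := module) h
  exact hy ((smul_eq_zero.mp h2).resolve_left two_ne_zero)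

lemma add_ne_neg_sub_of_ne_zero {x : V} (hx : x ≠ 0) (y : V) : x + y ≠ -(x - y) := by
  intro h
  have h2 : (2 : ℝ) • x = 0 := by linear_combination (norm := module) h
  exact hx ((smul_eq_zero.mp h2).resolve_left two_ne_zero)

end Restriction

theorem stmt_10_general {V : Type*} [NormedAddCommGroup V] [InnerProductSpace ℝ V]
    (Sg : Set V)
    (hrs_pos : ∀ γ ∈ Sg, ∀ δ ∈ Sg, 0 < ⟪γ, δ⟫ → γ ≠ δ → γ - δ ∈ Sg)
    (hrs_neg : ∀ γ ∈ Sg, ∀ δ ∈ Sg, ⟪γ, δ⟫ < 0 → γ ≠ -δ → γ + δ ∈ Sg)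
    (σ : V →ₗ[ℝ] V) (res : V → V)
    (hres : ∀ v, res v = (1 / 2 : ℝ) • (v + σ v))
    (E1 Ek : V) (hindep : LinearIndependent ℝ ![E1, Ek])
    (α β α1 αk : V) (hα : α ∈ Sg) (hβ : β ∈ Sg)
    (hresα : res α = E1 + Ek) (hresβ : res β = E1 - Ek)
    (huniq1 : ∀ γ ∈ Sg, res γ = (2 : ℝ) • E1 → γ = α1)
    (huniqk : ∀ γ ∈ Sg, res γ = (2 : ℝ) • Ek → γ = αk) :
    β = α1 - α ∨ β = α - αk ∨ ⟪α, β⟫ = 0 := by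
  rw [eq_coe_half_smul_id_add hres] at hresα hresβ huniq1 huniqk
  have hE1 : E1 ≠ 0 := by simpa using hindep.ne_zero 0
  have hEk : Ek ≠ 0 := by simpa using hindep.ne_zero 1
  have hαβ : α ≠ β := fun h ↦
    add_ne_sub_of_ne_zero hEk E1 (by rw [← hresα, ← hresβ, h])
  have hαnβ : α ≠ -β := fun h ↦
    add_ne_neg_sub_of_ne_zero hE1 Ek (by rw [← hresα, ← hresβ, h, map_neg])
  rcases lt_trichotomy ⟪α, β⟫ 0 with hneg | hzero | hpos
  · have hsum : α + β = α1 :=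
      huniq1 _ (hrs_neg α hα β hβ hneg hαnβ) (by rw [map_add, hresα, hresβ]; module)
    left
    rw [← hsum]
    abel
  · exact .inr (.inr hzero)
  · have hdiff : α - β = αk :=
      huniqk _ (hrs_pos α hα β hβ hpos hαβ) (by rw [map_sub, hresα, hresβ]; module)
    right; left
    rw [← hdiff]
    abel

/-- In the restricted root setting of type BC_n/C_n (n ≥ 2) with
multiplicity m(2e_i) = 1 (so that α_i is the unique root of Σ̃ restricting to 2e_i),
if α is a longest root of Σ̃ with restriction e_1 + e_k (2 ≤ k ≤ n), then for any root
β with restriction e_1 − e_k one has (α,β) = 0 unless β = α_1 − α or β = α − α_k. -/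
theorem stmt_10 {V : Type*} [NormedAddCommGroup V] [InnerProductSpace ℝ V]
    (Sg : Set V)
    (hrs_pos : ∀ γ ∈ Sg, ∀ δ ∈ Sg, 0 < ⟪γ, δ⟫ → γ ≠ δ → γ - δ ∈ Sg)
    (hrs_neg : ∀ γ ∈ Sg, ∀ δ ∈ Sg, ⟪γ, δ⟫ < 0 → γ ≠ -δ → γ + δ ∈ Sg)
    (hint : ∀ γ ∈ Sg, ∀ δ ∈ Sg, ∃ z : ℤ, 2 * ⟪γ, δ⟫ = z * ⟪γ, γ⟫)
    (σ : V →ₗ[ℝ] V) (res : V → V)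
    (hres : ∀ v, res v = (1 / 2 : ℝ) • (v + σ v))
    (E1 Ek : V) (hindep : LinearIndependent ℝ ![E1, Ek])
    (α β α1 αk : V) (hα : α ∈ Sg) (hβ : β ∈ Sg) (hα1 : α1 ∈ Sg) (hαk : αk ∈ Sg)
    (hlongest : ∀ γ ∈ Sg, ‖γ‖ ≤ ‖α‖)
    (hresα : res α = E1 + Ek) (hresβ : res β = E1 - Ek)
    (hresα1 : res α1 = (2 : ℝ) • E1) (hresαk : res αk = (2 : ℝ) • Ek)
    (huniq1 : ∀ γ ∈ Sg, res γ = (2 : ℝ) • E1 → γ = α1)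
    (huniqk : ∀ γ ∈ Sg, res γ = (2 : ℝ) • Ek → γ = αk) :
    β = α1 - α ∨ β = α - αk ∨ ⟪α, β⟫ = 0 :=
  stmt_10_general Sg hrs_pos hrs_neg σ res hres E1 Ek hindep α β α1 αk hα hβ hresα hresβ huniq1
    huniqk
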